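/- arXiv:2605.04244 — 7 statements merged into one kernel-verified Lean document; each statement's English description precedes it below -/
import Mathlib

section
/- Fix a haplotype matrix M with h rows and m columns, its prefix array PA, and its PBWT. For any column j with 1 ≤ j < m and any row index i with 1 < i ≤ h, if the pair (i, j) is not a run-top (i.e., PBWT[i][j] = PBWT[i-1][j]), then φ_j(c) = φ_{j+1}(c), where c = PA[i][j]; that is, the co-lexicographic predecessor of haplotype c is the same at sites j and j+1. -/
/-- The row immediately above row `k` (identity on row 0). -/
def prevRow {h : ℕ} (k : Fin h) : Fin h :=
  ⟨k.val - 1, Nat.lt_of_le_of_lt (Nat.sub_le _ _) k.isLt⟩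

/-- The reversed prefix of haplotype `a` up to site `j - 1` (sites are 1-indexed):
`[M a (j-1), M a (j-2), ..., M a 1]`.  Comparing such lists lexicographically is
exactly the co-lexicographic comparison of the length-`(j-1)` prefixes. -/
def revPref {h : ℕ} (M : Fin h → ℕ → ℤ) (j : ℕ) (a : Fin h) : List ℤ :=
  ((List.range (j - 1)).reverse).map (fun t => M a (t + 1))

/-- Specification of the prefix array `PA` of the haplotype matrix `M`:
column 1 is the identity permutation, and for every column `j ≥ 1` the rows are
sorted by co-lexicographic order of the length-`(j-1)` prefixes, with ties broken
stably by original haplotype index. -/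
def paSpec {h : ℕ} (M : Fin h → ℕ → ℤ) (PA : ℕ → Equiv.Perm (Fin h)) : Prop :=
  (∀ i : Fin h, PA 1 i = i) ∧
    ∀ j, 1 ≤ j → ∀ i i' : Fin h, i < i' →
      List.Lex (· < ·) (revPref M j (PA j i)) (revPref M j (PA j i')) ∨
        (revPref M j (PA j i) = revPref M j (PA j i') ∧ PA j i < PA j i')

/-- `phi PA j c` is the color immediately above `c` in column `j` of the prefix
array (`none` when `c` occupies the first row). -/
def phi {h : ℕ} (PA : ℕ → Equiv.Perm (Fin h)) (j : ℕ) (c : Fin h) : Option (Fin h) :=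
  if ((PA j).symm c).val = 0 then none
  else some (PA j (prevRow ((PA j).symm c)))

/-!
Order the haplotypes in column `j` by the key (reversed prefix, index). Passing from
column `j` to `j + 1` prepends `M · j` to the reversed prefix, so the new order compares
the site-`j` characters first and falls back on the old order. If `c` and the haplotype
`d` just above it in column `j` carry the same character at site `j`, then `d` still
precedes `c` in column `j + 1`, and any haplotype strictly between them there would
carry that same character and hence lie strictly between them already in column `j`.
-/

def paKey {h : ℕ} (M : Fin h → ℕ → ℤ) (j : ℕ) (a : Fin h) : Lex (List ℤ × Fin h) :=
  toLex (revPref M j a, a)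

section Adjacency

variable {h : ℕ} {α : Type*} [LinearOrder α] {key : Fin h → α}

theorem prevRow_lt {k : Fin h} (hk : 0 < k.val) : prevRow k < k := by
  rw [Fin.lt_def]
  simp only [prevRow]
  omega

theorem not_lt_between_prevRow {σ : Equiv.Perm (Fin h)} (hσ : StrictMono (key ∘ σ))
    (i e : Fin h) (hde : key (σ (prevRow i)) < key e) (hec : key e < key (σ i)) : False := by
  have hq₁ : prevRow i < σ.symm e := hσ.lt_iff_lt.mp (by simpa using hde)
  have hq₂ : σ.symm e < i := hσ.lt_iff_lt.mp (by simpa using hec)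
  rw [Fin.lt_def] at hq₁ hq₂
  simp only [prevRow] at hq₁
  omega

theorem phi_eq_some_of_gap {PA : ℕ → Equiv.Perm (Fin h)} {j : ℕ}
    (hσ : StrictMono (key ∘ PA j)) {c d : Fin h} (hdc : key d < key c)
    (hgap : ∀ e, key d < key e → key e < key c → False) :
    phi PA j c = some d := by
  set k := (PA j).symm c
  set kd := (PA j).symm d
  have hkdk : kd < k := hσ.lt_iff_lt.mp (by simpa [kd, k] using hdc)
  have hk : k.val ≠ 0 := by rw [Fin.lt_def] at hkdk; omega
  have hkd_le : kd ≤ prevRow k := by rw [Fin.lt_def] at hkdk; simp only [Fin.le_def, prevRow]; omega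
  have hkd_eq : kd = prevRow k := by
    refine hkd_le.eq_of_not_lt fun hlt => hgap (PA j (prevRow k)) ?_ ?_
    · simpa [kd] using hσ hlt
    · simpa [k] using hσ (prevRow_lt (Nat.pos_of_ne_zero hk))
  rw [phi, if_neg hk, ← hkd_eq, Equiv.apply_symm_apply]

end Adjacency

section PrefixArray

variable {h : ℕ} (M : Fin h → ℕ → ℤ)

theorem revPref_succ {j : ℕ} (hj : 1 ≤ j) (a : Fin h) :
    revPref M (j + 1) a = M a j :: revPref M j a := by
  obtain ⟨n, rfl⟩ := Nat.exists_eq_add_of_le hj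
  simp [revPref, List.range_succ, Nat.add_comm 1 n]

theorem paKey_succ_lt_iff {j : ℕ} (hj : 1 ≤ j) (a b : Fin h) :
    paKey M (j + 1) a < paKey M (j + 1) b ↔
      M a j < M b j ∨ (M a j = M b j ∧ paKey M j a < paKey M j b) := by
  simp only [paKey, Prod.Lex.toLex_lt_toLex, revPref_succ M hj, List.cons_lt_cons_iff,
    List.cons_eq_cons]
  tauto

theorem paKey_between_of_succ {j : ℕ} (hj : 1 ≤ j) {a b e : Fin h} (hab : M a j = M b j)
    (hae : paKey M (j + 1) a < paKey M (j + 1) e) (heb : paKey M (j + 1) e < paKey M (j + 1) b) :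
    paKey M j a < paKey M j e ∧ paKey M j e < paKey M j b := by
  rw [paKey_succ_lt_iff M hj] at hae heb
  rcases hae with hae | ⟨hae', hae⟩ <;> rcases heb with heb | ⟨heb', heb⟩
  · omega
  · omega
  · omega
  · exact ⟨hae, heb⟩

variable {M}

theorem paKey_strictMono {PA : ℕ → Equiv.Perm (Fin h)} (hspec : paSpec M PA) {j : ℕ}
    (hj : 1 ≤ j) : StrictMono (paKey M j ∘ PA j) := fun i i' hii' =>
  Prod.Lex.toLex_lt_toLex.mpr (hspec.2 j hj i i' hii')

end PrefixArray

theorem stmt2_general {h : ℕ} (M : Fin h → ℕ → ℤ) (PA : ℕ → Equiv.Perm (Fin h))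
    (hspec : paSpec M PA)
    (j : ℕ) (hj1 : 1 ≤ j)
    (i : Fin h) (hi : 0 < i.val)
    (hrun : M (PA j i) j = M (PA j (prevRow i)) j) :
    phi PA j (PA j i) = phi PA (j + 1) (PA j i) := by
  have hmono := paKey_strictMono hspec hj1
  have hgap := not_lt_between_prevRow hmono i
  have hdc : paKey M j (PA j (prevRow i)) < paKey M j (PA j i) :=
    hmono (prevRow_lt hi)
  rw [phi_eq_some_of_gap hmono hdc hgap, phi_eq_some_of_gap (paKey_strictMono hspec (by omega))]
  · exact (paKey_succ_lt_iff M hj1 _ _).mpr (Or.inr ⟨hrun.symm, hdc⟩)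
  · intro e hde hec
    obtain ⟨hde', hec'⟩ := paKey_between_of_succ M hj1 hrun.symm hde hec
    exact hgap e hde' hec'

/-- If `(i, j)` is not a run-top (`PBWT[i][j] = PBWT[i-1][j]`, i.e.
`M (PA j i) j = M (PA j (i-1)) j` with `i > 1`), then `φ_j(c) = φ_{j+1}(c)` for
`c = PA[i][j]`. -/
theorem stmt2 {h m : ℕ} (M : Fin h → ℕ → ℤ) (PA : ℕ → Equiv.Perm (Fin h))
    (hspec : paSpec M PA)
    (j : ℕ) (hj1 : 1 ≤ j) (hjm : j < m)
    (i : Fin h) (hi : 0 < i.val)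
    (hrun : M (PA j i) j = M (PA j (prevRow i)) j) :
    phi PA j (PA j i) = phi PA (j + 1) (PA j i) :=
  stmt2_general M PA hspec j hj1 i hi hrun
end

section
/- Fix a haplotype matrix M, its prefix array PA and PBWT, and a haplotype index c. Let [b, e] be a haplotype interval of S_c, i.e., no pair (f(j), j) with PA[f(j)][j] = c is a run-top for b ≤ j < e. Then either φ_j(c) is the same value for all j ∈ [b, e], or PA[1][j] = c for all j ∈ [b, e]. -/
namespace Stmt3Aux

lemma lex_cons_cons_iff {x y : ℤ} {l l' : List ℤ} :
    List.Lex (· < ·) (x :: l) (y :: l') ↔ x < y ∨ (x = y ∧ List.Lex (· < ·) l l') := by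
  constructor
  · intro hl
    match hl with
    | .cons ht => exact Or.inr ⟨rfl, ht⟩
    | .rel hr => exact Or.inl hr
  · rintro (hr | ⟨he, hl⟩)
    · exact List.Lex.rel hr
    · exact he ▸ List.Lex.cons hl

variable {h : ℕ} (M : Fin h → ℕ → ℤ)

def ord (j : ℕ) (a a' : Fin h) : Prop :=
  List.Lex (· < ·) (revPref M j a) (revPref M j a') ∨
    (revPref M j a = revPref M j a' ∧ a < a')

lemma ord_irrefl (j : ℕ) (a : Fin h) : ¬ ord M j a a := by
  rintro (hl | ⟨-, hlt⟩)
  · exact irrefl _ hl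
  · exact lt_irrefl a hlt

lemma ord_asymm (j : ℕ) {a a' : Fin h} (h1 : ord M j a a') (h2 : ord M j a' a) : False := by
  rcases h1 with hl | ⟨he, hlt⟩ <;> rcases h2 with hl' | ⟨he', hlt'⟩
  · exact asymm hl hl'
  · rw [he'] at hl; exact irrefl _ hl
  · rw [he] at hl'; exact irrefl _ hl'
  · exact lt_asymm hlt hlt'

lemma ord_iff_lt (PA : ℕ → Equiv.Perm (Fin h)) (hspec : paSpec M PA)
    {j : ℕ} (hj : 1 ≤ j) {i i' : Fin h} :
    ord M j (PA j i) (PA j i') ↔ i < i' := by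
  constructor
  · intro ho
    rcases lt_trichotomy i i' with hc | hc | hc
    · exact hc
    · subst hc; exact absurd ho (ord_irrefl M j _)
    · exact absurd (hspec.2 j hj i' i hc) (fun h2 => ord_asymm M j ho h2)
  · exact fun hc => hspec.2 j hj i i' hc

lemma revPref_succ {j : ℕ} (hj : 1 ≤ j) (a : Fin h) :
    revPref M (j + 1) a = M a j :: revPref M j a := by
  unfold revPref
  have h1 : j + 1 - 1 = (j - 1) + 1 := by omega
  have h2 : j - 1 + 1 = j := by omega
  rw [h1, List.range_succ, List.reverse_append, List.reverse_singleton,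
    List.singleton_append, List.map_cons, h2]

lemma ord_succ {j : ℕ} (hj : 1 ≤ j) (a a' : Fin h) :
    ord M (j + 1) a a' ↔
      M a j < M a' j ∨ (M a j = M a' j ∧ ord M j a a') := by
  rw [ord, revPref_succ M hj, revPref_succ M hj, lex_cons_cons_iff]
  constructor
  · rintro ((hr | ⟨he, hl⟩) | ⟨he, hlt⟩)
    · exact Or.inl hr
    · exact Or.inr ⟨he, Or.inl hl⟩
    · injection he with h1 h2
      exact Or.inr ⟨h1, Or.inr ⟨h2, hlt⟩⟩
  · rintro (hr | ⟨he, hl | ⟨he2, hlt⟩⟩)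
    · exact Or.inl (Or.inl hr)
    · exact Or.inl (Or.inr ⟨he, hl⟩)
    · exact Or.inr ⟨by rw [he, he2], hlt⟩

/-- Key step: if `c` is not at a run-top in column `j`, then `phi` is unchanged
from column `j` to column `j+1`. -/
lemma phi_step (PA : ℕ → Equiv.Perm (Fin h)) (hspec : paSpec M PA)
    (c : Fin h) {j : ℕ} (hj : 1 ≤ j)
    (hne : ((PA j).symm c).val ≠ 0)
    (heq : M (PA j ((PA j).symm c)) j = M (PA j (prevRow ((PA j).symm c))) j) :
    phi PA (j + 1) c = phi PA j c := by
  set f : Fin h := (PA j).symm c with hf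
  set p : Fin h := prevRow f with hp
  set d : Fin h := PA j p with hd
  have hMeq : M d j = M c j := by
    rw [Equiv.apply_symm_apply] at heq
    exact heq.symm
  have hpf : p < f := by
    have : p.val < f.val := by
      simp only [hp, prevRow]
      omega
    exact this
  have hcPA : PA j f = c := Equiv.apply_symm_apply _ _
  -- d ≺_j c
  have hordj : ord M j d c := by
    have := (ord_iff_lt M PA hspec hj (i := p) (i' := f)).2 hpf
    rwa [hcPA] at this
  -- d ≺_{j+1} c
  have hord : ord M (j + 1) d c :=
    (ord_succ M hj d c).2 (Or.inr ⟨hMeq, hordj⟩)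
  set f' : Fin h := (PA (j + 1)).symm c with hf'
  set r' : Fin h := (PA (j + 1)).symm d with hr'
  have hj1 : 1 ≤ j + 1 := by omega
  have hr'f' : r' < f' := by
    have := (ord_iff_lt M PA hspec hj1 (i := r') (i' := f'))
    rw [Equiv.apply_symm_apply, Equiv.apply_symm_apply] at this
    exact this.1 hord
  have hf'ne : f'.val ≠ 0 := by
    intro h0
    exact absurd (Fin.lt_iff_val_lt_val.1 hr'f') (by omega)
  -- show prevRow f' = r'
  have hkey : prevRow f' = r' := by
    by_contra hne2
    have hlt : r' < prevRow f' := by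
      have h1 : r'.val < f'.val := hr'f'
      have h2 : (prevRow f').val = f'.val - 1 := rfl
      have : r'.val ≤ (prevRow f').val := by omega
      rcases lt_or_eq_of_le this with hlt | heq2
      · exact hlt
      · exact absurd (Fin.ext heq2.symm) hne2
    set x : Fin h := PA (j + 1) (prevRow f') with hx
    have hpf' : prevRow f' < f' := by
      have : (prevRow f').val < f'.val := by
        simp only [prevRow]
        omega
      exact this
    have hdx : ord M (j + 1) d x := by
      have := (ord_iff_lt M PA hspec hj1 (i := r') (i' := prevRow f')).2 hlt
      rwa [Equiv.apply_symm_apply] at this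
    have hxc : ord M (j + 1) x c := by
      have := (ord_iff_lt M PA hspec hj1 (i := prevRow f') (i' := f')).2 hpf'
      rwa [Equiv.apply_symm_apply] at this
    rw [ord_succ M hj] at hdx hxc
    have hMdx : M d j ≤ M x j := by rcases hdx with hh | ⟨hh, -⟩ <;> omega
    have hMxc : M x j ≤ M c j := by rcases hxc with hh | ⟨hh, -⟩ <;> omega
    have hMdx' : M d j = M x j := by omega
    have hMxc' : M x j = M c j := by omega
    have hdxj : ord M j d x := by
      rcases hdx with hh | ⟨-, hh⟩
      · omega
      · exact hh
    have hxcj : ord M j x c := by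
      rcases hxc with hh | ⟨-, hh⟩
      · omega
      · exact hh
    -- rows in column j
    have h1 : p < (PA j).symm x := by
      have := (ord_iff_lt M PA hspec hj (i := p) (i' := (PA j).symm x))
      rw [Equiv.apply_symm_apply] at this
      exact this.1 hdxj
    have h2 : (PA j).symm x < f := by
      have := (ord_iff_lt M PA hspec hj (i := (PA j).symm x) (i' := f))
      rw [Equiv.apply_symm_apply, hcPA] at this
      exact this.1 hxcj
    have hpv : p.val = f.val - 1 := rfl
    have h1' : p.val < ((PA j).symm x).val := h1
    have h2' : ((PA j).symm x).val < f.val := h2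
    omega
  -- conclude
  unfold phi
  rw [if_neg hne, ← hf', if_neg hf'ne, hkey, hr', Equiv.apply_symm_apply, ← hf, ← hp, ← hd]

end Stmt3Aux

/-- If `[b, e]` is a haplotype interval of `S_c`, i.e. for `b ≤ j < e` the pair
`(f(j), j)` (where `f(j) = (PA j).symm c` is the row of `c` in column `j`) is not a
run-top, then either `φ_j(c)` has the same value for all `j ∈ [b, e]`, or `c`
occupies the first row of column `j` for all `j ∈ [b, e]`. -/
theorem stmt3 {h : ℕ} (M : Fin h → ℕ → ℤ) (PA : ℕ → Equiv.Perm (Fin h))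
    (hspec : paSpec M PA)
    (c : Fin h) (b e : ℕ) (hb : 1 ≤ b) (hbe : b ≤ e)
    (hnotrun : ∀ j, b ≤ j → j < e →
      ((PA j).symm c).val ≠ 0 ∧
        M (PA j ((PA j).symm c)) j = M (PA j (prevRow ((PA j).symm c))) j) :
    (∀ j, b ≤ j → j ≤ e → phi PA j c = phi PA b c) ∨
      (∀ j, b ≤ j → j ≤ e → ((PA j).symm c).val = 0) := by
  left
  intro j hbj hje
  induction j with
  | zero => omega
  | succ k ih =>
    rcases Nat.lt_or_ge b (k + 1) with hlt | hge
    · have hbk : b ≤ k := by omega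
      have hke : k < e := by omega
      obtain ⟨hne, heq⟩ := hnotrun k hbk hke
      have := Stmt3Aux.phi_step M PA hspec c (by omega : 1 ≤ k) hne heq
      rw [this, ih hbk (by omega)]
    · have : b = k + 1 := by omega
      rw [this]
end

section
/- For a PBWT with h haplotypes and m sites, let r̃ be the total number of runs summed over all columns of the PBWT. Then the total number of haplotype intervals, summed over all haplotypes, is at least r̃ and at most r̃ + h. -/
open scoped Classical

/-- Row `i` is a run-top of the column `v` if it is the first row or its character
differs from the one in the row above. -/
def RunTop {h : ℕ} (v : Fin h → ℤ) (i : Fin h) : Prop :=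
  i.val = 0 ∨ v i ≠ v (prevRow i)

/-- Let `r̃` be the total number of runs (equivalently, run-tops) summed over all
`m` columns of the PBWT `B`, and let the number of haplotype intervals of color `c`
be one plus the number of non-final sites at which `c`'s entry is a run-top
(`PA j` is the permutation of column `j`, so `c`'s row is `(PA j).symm c`).
Then the total number of haplotype intervals lies between `r̃` and `r̃ + h`. -/
theorem stmt4 {h m : ℕ} (hm : 1 ≤ m)
    (B : Fin m → Fin h → ℤ) (PA : Fin m → Equiv.Perm (Fin h))
    (rtil total : ℕ)
    (hr : rtil = ∑ j : Fin m, (Finset.univ.filter (fun i : Fin h => RunTop (B j) i)).card)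
    (htotal : total = ∑ c : Fin h,
      ((Finset.univ.filter
          (fun j : Fin m => j.val + 1 < m ∧ RunTop (B j) ((PA j).symm c))).card + 1)) :
    rtil ≤ total ∧ total ≤ rtil + h := by
  classical
  set r : Fin m → ℕ := fun j => (Finset.univ.filter (fun i : Fin h => RunTop (B j) i)).card
    with hrdef
  have hcol : ∀ j : Fin m,
      (∑ c : Fin h, if j.val + 1 < m ∧ RunTop (B j) ((PA j).symm c) then 1 else 0)
        = if j.val + 1 < m then r j else 0 := by
    intro j
    by_cases hj : j.val + 1 < m
    · simp only [hj, true_and, if_true]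
      rw [hrdef]
      simp only [Finset.card_filter]
      exact Equiv.sum_comp (PA j).symm (fun i => if RunTop (B j) i then 1 else 0)
    · simp [hj]
  have htotal' : total = (∑ j : Fin m, if j.val + 1 < m then r j else 0) + h := by
    rw [htotal, Finset.sum_add_distrib]
    simp only [Finset.sum_const, Finset.card_univ, Fintype.card_fin, smul_eq_mul, mul_one]
    congr 1
    calc ∑ c : Fin h, (Finset.univ.filter
          (fun j : Fin m => j.val + 1 < m ∧ RunTop (B j) ((PA j).symm c))).card
        = ∑ c : Fin h, ∑ j : Fin m,
            if j.val + 1 < m ∧ RunTop (B j) ((PA j).symm c) then 1 else 0 := by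
          simp only [Finset.card_filter]
      _ = ∑ j : Fin m, ∑ c : Fin h,
            if j.val + 1 < m ∧ RunTop (B j) ((PA j).symm c) then 1 else 0 :=
          Finset.sum_comm
      _ = ∑ j : Fin m, if j.val + 1 < m then r j else 0 := by
          exact Finset.sum_congr rfl (fun j _ => hcol j)
  have hrj_le : ∀ j : Fin m, r j ≤ h := fun j =>
    le_trans (Finset.card_filter_le _ _) (by simp)
  have hr' : rtil = ∑ j : Fin m, r j := hr
  constructor
  · rw [hr', htotal']
    have jm : Fin m := ⟨m - 1, by omega⟩
    have hsplit : (∑ j : Fin m, r j)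
        = (∑ j : Fin m, if j.val + 1 < m then r j else 0)
          + (∑ j : Fin m, if j.val + 1 < m then 0 else r j) := by
      rw [← Finset.sum_add_distrib]
      apply Finset.sum_congr rfl
      intro j _
      by_cases hj : j.val + 1 < m <;> simp [hj]
    rw [hsplit]
    apply Nat.add_le_add_left
    have heq : ∀ j : Fin m, (if j.val + 1 < m then 0 else r j)
        = if j = (⟨m - 1, by omega⟩ : Fin m) then r j else 0 := by
      intro j
      have hj := j.isLt
      by_cases hc : j.val + 1 < m
      · have : j ≠ (⟨m - 1, by omega⟩ : Fin m) := by
          intro hh; rw [hh] at hc; simp at hc; omega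
        rw [if_pos hc, if_neg this]
      · have : j = (⟨m - 1, by omega⟩ : Fin m) := Fin.ext (by simp; omega)
        rw [if_neg hc, if_pos this]
    calc (∑ j : Fin m, if j.val + 1 < m then 0 else r j)
        = ∑ j : Fin m, if j = (⟨m - 1, by omega⟩ : Fin m) then r j else 0 :=
          Finset.sum_congr rfl (fun j _ => heq j)
      _ = r ⟨m - 1, by omega⟩ := by rw [Finset.sum_ite_eq' Finset.univ]; simp
      _ ≤ h := hrj_le _
  · rw [hr', htotal']
    apply Nat.add_le_add_right
    apply Finset.sum_le_sum
    intro j _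
    by_cases hj : j.val + 1 < m <;> simp [hj]
end

section
/- In the decomposition algorithm, suppose that whenever the pending interval [b_c, j'] of color c would overlap exactly d established refined segments of RS[φ_{j'}(c)] at an earlier column j' < j (with φ constant on [b_c, j]), an Active Split is triggered and [b_c, j'] becomes a refined segment. Then at column j, the interval [b_c, j] overlaps at most d refined segments of RS[c'], where c' = φ_j(c); moreover if RS[c'] is nonempty then b_c lies inside some refined segment of RS[c']. -/
/-- `Partitions L x y`: the list `L` of (nonempty, sorted, consecutive) integer
intervals partitions `[x, y]`. -/
def Partitions : List (ℕ × ℕ) → ℕ → ℕ → Prop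
  | [], x, y => y + 1 = x
  | (b, e) :: t, x, y => b = x ∧ b ≤ e ∧ Partitions t (e + 1) y

/-- Number of intervals in `L` overlapping (nonempty intersection with) `[b, e]`. -/
def overlapCnt (b e : ℕ) (L : List (ℕ × ℕ)) : ℕ :=
  (L.filter (fun p => decide (p.1 ≤ e ∧ b ≤ p.2))).length


/-!
Let `f t` be the number of segments of `A t` overlapping `[b, t]`. Since a segment is present
at the column of its right endpoint, the segments added between columns `t` and `t + 1` all end
at `t + 1`, so at most one of them is new and `f (t + 1) ≤ f t + 1`. As `f b ≤ 1 < d`, the count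
cannot jump over `d`: if `f j > d`, it equals `d` at some column in `[b, j)`, where the Active
Split would have been triggered.
-/

section overlapCnt

lemma overlapCnt_eq_countP (b e : ℕ) (L : List (ℕ × ℕ)) :
    overlapCnt b e L = L.countP (fun p => decide (p.1 ≤ e ∧ b ≤ p.2)) :=
  List.countP_eq_length_filter.symm

lemma overlapCnt_append (b e : ℕ) (L₁ L₂ : List (ℕ × ℕ)) :
    overlapCnt b e (L₁ ++ L₂) = overlapCnt b e L₁ + overlapCnt b e L₂ := by
  simp only [overlapCnt_eq_countP, List.countP_append]

lemma overlapCnt_mono {b e b' e' : ℕ} {L : List (ℕ × ℕ)}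
    (h : ∀ p ∈ L, p.1 ≤ e ∧ b ≤ p.2 → p.1 ≤ e' ∧ b' ≤ p.2) :
    overlapCnt b e L ≤ overlapCnt b' e' L := by
  simp only [overlapCnt_eq_countP]
  exact List.countP_mono_left (by simpa using h)

end overlapCnt

namespace Partitions

lemma le_add_one : ∀ {L : List (ℕ × ℕ)} {x y : ℕ}, Partitions L x y → x ≤ y + 1
  | [], _, _, h => h.ge
  | (_, _) :: _, _, _, ⟨_, _, ht⟩ => by have := le_add_one ht; omega

lemma bounds_of_mem : ∀ {L : List (ℕ × ℕ)} {x y : ℕ}, Partitions L x y →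
    ∀ p ∈ L, x ≤ p.1 ∧ p.1 ≤ p.2 ∧ p.2 ≤ y
  | [], _, _, _, _, hp => by simp at hp
  | (a, e) :: t, x, y, ⟨hx, hae, ht⟩, p, hp => by
    rcases List.mem_cons.1 hp with rfl | hp
    · have := le_add_one ht; simp only; omega
    · have := bounds_of_mem ht p hp; omega

lemma exists_mem_of_mem_Icc : ∀ {L : List (ℕ × ℕ)} {x y c : ℕ}, Partitions L x y →
    x ≤ c → c ≤ y → ∃ p ∈ L, p.1 ≤ c ∧ c ≤ p.2
  | [], _, _, _, h, hxc, hcy => by simp only [Partitions] at h; omega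
  | (a, e) :: t, _, _, c, ⟨_, _, ht⟩, hxc, hcy => by
    by_cases hce : c ≤ e
    · exact ⟨(a, e), List.mem_cons_self, by omega, hce⟩
    · obtain ⟨p, hp, hpc⟩ := exists_mem_of_mem_Icc ht (by omega) hcy
      exact ⟨p, List.mem_cons_of_mem _ hp, hpc⟩

lemma of_append : ∀ {L₁ L₂ : List (ℕ × ℕ)} {x y z : ℕ},
    Partitions (L₁ ++ L₂) x y → Partitions L₁ x z → Partitions L₂ (z + 1) y
  | [], _, _, _, _, h, h₁ => by simp only [Partitions] at h₁; simpa [h₁] using h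
  | (_, _) :: _, _, _, _, _, ⟨_, _, ht⟩, ⟨_, _, ht₁⟩ => of_append ht ht₁

lemma overlapCnt_self_le_one : ∀ {L : List (ℕ × ℕ)} {x y : ℕ}, Partitions L x y →
    ∀ c, overlapCnt c c L ≤ 1
  | [], _, _, _, _ => by simp [overlapCnt]
  | (a, e) :: t, _, _, ⟨_, _, ht⟩, c => by
    rw [overlapCnt_eq_countP, List.countP_cons, ← overlapCnt_eq_countP]
    by_cases hce : c ≤ e
    · have hnone : overlapCnt c c t = 0 := by
        rw [overlapCnt_eq_countP, List.countP_eq_zero]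
        intro p hp hpc
        have := (bounds_of_mem ht p hp).1
        simp only [decide_eq_true_eq] at hpc
        omega
      rw [hnone]
      split <;> simp
    · rw [if_neg (by simp only [decide_eq_true_eq]; omega)]
      exact overlapCnt_self_le_one ht c

end Partitions

lemma le_of_forall_ne_of_succ_le_add_one {f : ℕ → ℕ} {a d : ℕ} (ha : f a ≤ d)
    (hf : ∀ t, a ≤ t → f (t + 1) ≤ f t + 1) {n : ℕ} (hn : a ≤ n)
    (hne : ∀ t, a ≤ t → t < n → f t ≠ d) : f n ≤ d := by
  induction n, hn using Nat.le_induction with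
  | base => exact ha
  | succ n hn ih =>
    have hlt : f n < d := lt_of_le_of_ne
      (ih fun t hat htn => hne t hat (by omega)) (hne n hn (by omega))
    have := hf n hn
    omega

section RefinedSegments

variable {A : ℕ → List (ℕ × ℕ)} {y : ℕ → ℕ}

lemma snd_eq_succ_of_mem_append (hpart : ∀ t, Partitions (A t) 1 (y t))
    (hy : ∀ t, y t ≤ t) (hpre : ∀ t t', t ≤ t' → A t <+: A t')
    (happ : ∀ t, ∀ p ∈ A t, p ∈ A p.2) {t : ℕ} {R : List (ℕ × ℕ)}
    (hR : A t ++ R = A (t + 1)) : ∀ p ∈ R, p.2 = t + 1 := by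
  have hRpart : Partitions R (y t + 1) (y (t + 1)) := (hR ▸ hpart (t + 1)).of_append (hpart t)
  intro p hp
  have hpR := hRpart.bounds_of_mem p hp
  have hpA : p ∈ A p.2 := happ (t + 1) p (hR ▸ List.mem_append_right _ hp)
  by_contra hne
  have hpt : p.2 ≤ t := by have := hy (t + 1); omega
  have := (hpart t).bounds_of_mem p ((hpre _ _ hpt).subset hpA)
  omega

lemma overlapCnt_succ_le (hpart : ∀ t, Partitions (A t) 1 (y t))
    (hy : ∀ t, y t ≤ t) (hpre : ∀ t t', t ≤ t' → A t <+: A t')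
    (happ : ∀ t, ∀ p ∈ A t, p ∈ A p.2) (b t : ℕ) :
    overlapCnt b (t + 1) (A (t + 1)) ≤ overlapCnt b t (A t) + 1 := by
  obtain ⟨R, hR⟩ := hpre t (t + 1) t.le_succ
  have hnew := snd_eq_succ_of_mem_append hpart hy hpre happ hR
  have hRpart : Partitions R (y t + 1) (y (t + 1)) := (hR ▸ hpart (t + 1)).of_append (hpart t)
  have hold : overlapCnt b (t + 1) (A t) ≤ overlapCnt b t (A t) :=
    overlapCnt_mono fun p hp hpb => by
      have := (hpart t).bounds_of_mem p hp
      have := hy t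
      omega
  have hfresh : overlapCnt b (t + 1) R ≤ overlapCnt (t + 1) (t + 1) R :=
    overlapCnt_mono fun p hp hpb => ⟨hpb.1, (hnew p hp).ge⟩
  calc overlapCnt b (t + 1) (A (t + 1))
      = overlapCnt b (t + 1) (A t) + overlapCnt b (t + 1) R := by rw [← hR, overlapCnt_append]
    _ ≤ overlapCnt b t (A t) + 1 :=
        add_le_add hold (hfresh.trans (hRpart.overlapCnt_self_le_one _))

end RefinedSegments

/-- Lemma (overlap at creation).  `A t` is the state of `RS[c']` (for
`c' = φ_t(c)`, constant on `[b, j]`) at column `t`: it partitions a prefix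
`[1, y t]` of `[1, m]` with `y t ≤ t`, earlier states are prefixes of later ones,
and every segment is already present at the column of its right endpoint.
Suppose that whenever the pending interval `[b, j']` would overlap exactly `d`
established segments of `A j'` at an earlier column `j' < j`, an Active Split
would have been triggered (so this never happens, as `[b, ·]` is still pending).
Then `[b, j]` overlaps at most `d` segments of `A j`; moreover if `A j` is
nonempty then `b` lies inside some segment of `A j`. -/
theorem stmt7 (d b j : ℕ) (A : ℕ → List (ℕ × ℕ)) (y : ℕ → ℕ)
    (hpart : ∀ t, Partitions (A t) 1 (y t)) (hy : ∀ t, y t ≤ t)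
    (hpre : ∀ t t', t ≤ t' → A t <+: A t')
    (happ : ∀ t, ∀ p ∈ A t, p ∈ A p.2)
    (hd : 1 < d) (hb1 : 1 ≤ b) (hbj : b ≤ j)
    (hby : A j ≠ [] → b ≤ y j)
    (htrig : ∀ j', b ≤ j' → j' < j → overlapCnt b j' (A j') ≠ d) :
    overlapCnt b j (A j) ≤ d ∧
      (A j ≠ [] → ∃ p ∈ A j, p.1 ≤ b ∧ b ≤ p.2) := by
  refine ⟨?_, fun hne => (hpart j).exists_mem_of_mem_Icc hb1 (hby hne)⟩
  have hbase : overlapCnt b b (A b) ≤ d := ((hpart b).overlapCnt_self_le_one b).trans hd.le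
  exact le_of_forall_ne_of_succ_le_add_one (f := fun t => overlapCnt b t (A t)) hbase
    (fun t _ => overlapCnt_succ_le hpart hy hpre happ b t) hbj htrig
end

section
/- In the decomposition algorithm with parameter d > 1, if a refined segment [b_c, j] appended to RS[c] at column j overlaps exactly d refined segments of RS[c'] (where c' = φ_j(c)) at that moment, then the right endpoint of the last refined segment currently stored in RS[c'] equals j. -/
lemma part_le : ∀ (L : List (ℕ × ℕ)) (x y : ℕ), Partitions L x y → x ≤ y + 1
  | [], x, y, h => le_of_eq h.symm
  | (b, e) :: t, x, y, h => by
    obtain ⟨hb, hbe, ht⟩ := h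
    have := part_le t (e+1) y ht
    omega

lemma part_mem : ∀ (L : List (ℕ × ℕ)) (x y : ℕ), Partitions L x y →
    ∀ p ∈ L, x ≤ p.1 ∧ p.1 ≤ p.2 ∧ p.2 ≤ y
  | [], x, y, h => by simp
  | (b, e) :: t, x, y, h => by
    obtain ⟨hb, hbe, ht⟩ := h
    have hle := part_le t (e+1) y ht
    intro p hp
    rcases List.mem_cons.mp hp with hp | hp
    · subst hp; simp only; omega
    · have := part_mem t (e+1) y ht p hp
      omega

lemma part_last : ∀ (L : List (ℕ × ℕ)) (x y : ℕ), Partitions L x y → L ≠ [] →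
    ∃ p, L.getLast? = some p ∧ p.2 = y
  | [], _, _, _, hne => absurd rfl hne
  | [(b, e)], x, y, h, _ => by
    obtain ⟨hb, hbe, ht⟩ := h
    simp only [Partitions] at ht
    exact ⟨(b, e), rfl, by omega⟩
  | (b, e) :: q :: t, x, y, h, _ => by
    obtain ⟨hb, hbe, ht⟩ := h
    obtain ⟨p, hp, hp2⟩ := part_last (q :: t) (e+1) y ht (by simp)
    exact ⟨p, by rw [List.getLast?_cons_cons]; exact hp, hp2⟩

lemma part_pairwise : ∀ (L : List (ℕ × ℕ)) (x y : ℕ), Partitions L x y →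
    L.Pairwise (fun p q => p.1 < q.1)
  | [], _, _, _ => List.Pairwise.nil
  | (b, e) :: t, x, y, h => by
    obtain ⟨hb, hbe, ht⟩ := h
    refine List.Pairwise.cons ?_ (part_pairwise t (e+1) y ht)
    intro q hq
    have := part_mem t (e+1) y ht q hq
    simp only
    omega

lemma part_point : ∀ (L : List (ℕ × ℕ)) (x y j : ℕ), Partitions L x y →
    (L.filter (fun p => decide (p.1 ≤ j ∧ j ≤ p.2))).length ≤ 1
  | [], _, _, _, _ => by simp
  | (b, e) :: t, x, y, j, h => by
    obtain ⟨hb, hbe, ht⟩ := h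
    by_cases hc : b ≤ j ∧ j ≤ e
    · have h0 : (t.filter (fun p => decide (p.1 ≤ j ∧ j ≤ p.2))) = [] := by
        rw [List.filter_eq_nil_iff]
        intro q hq
        have := part_mem t (e+1) y ht q hq
        simp only [decide_eq_true_eq]
        omega
      rw [List.filter_cons, if_pos (by simpa using hc), h0]
      simp
    · have := part_point t (e+1) y j ht
      simp only [List.filter_cons, decide_eq_true_eq, if_neg hc]
      exact this

/-- Lemma (d-j).  `A t` is the state of `RS[c']` (`c' = φ_t(c)`, constant on
`[b, j]`) at column `t`, partitioning a prefix `[1, y t]` with `y t ≤ t`; earlier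
states are prefixes of later ones and every segment is present at the column of
its right endpoint.  Suppose the refined segment `[b, j]` appended to `RS[c]` at
column `j` overlaps exactly `d` segments of `A j` (and, as `[b, ·]` was pending
until column `j`, no earlier exact-`d` overlap occurred: `htrig`).  Then the
right endpoint of the last segment currently stored in `A j` equals `j`. -/
theorem stmt9 (d b j : ℕ) (A : ℕ → List (ℕ × ℕ)) (y : ℕ → ℕ)
    (hpart : ∀ t, Partitions (A t) 1 (y t)) (hy : ∀ t, y t ≤ t)
    (hpre : ∀ t t', t ≤ t' → A t <+: A t')
    (happ : ∀ t, ∀ p ∈ A t, p ∈ A p.2)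
    (hd : 1 < d) (hb1 : 1 ≤ b) (hbj : b ≤ j)
    (htrig : ∀ j', b ≤ j' → j' < j → overlapCnt b j' (A j') ≠ d)
    (hcnt : overlapCnt b j (A j) = d) :
    ∃ p, (A j).getLast? = some p ∧ p.2 = j := by
  rcases eq_or_lt_of_le hbj with rfl | hblt
  · -- b = j : overlap with a point is ≤ 1 < d, contradiction
    exfalso
    have := part_point (A b) 1 (y b) b (hpart b)
    rw [show (fun p : ℕ × ℕ => decide (p.1 ≤ b ∧ b ≤ p.2)) =
        (fun p : ℕ × ℕ => decide (p.1 ≤ b ∧ b ≤ p.2)) from rfl] at this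
    unfold overlapCnt at hcnt
    omega
  · -- b < j
    have hyj : y j = j := by
      by_contra hne
      have hle : y j ≤ j - 1 := by have := hy j; omega
      -- A (j-1) = A j
      have hAeq : A (j - 1) = A j := by
        obtain ⟨s, hs⟩ := hpre (j - 1) j (by omega)
        rcases s with _ | ⟨p, s⟩
        · simpa using hs
        · exfalso
          have hpj : p ∈ A j := by rw [← hs]; simp
          have hpmem := part_mem (A j) 1 (y j) (hpart j) p hpj
          have hp2 : p ∈ A p.2 := happ j p hpj
          have hpre2 : A p.2 <+: A (j - 1) := hpre p.2 (j - 1) (by omega)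
          have hpprev : p ∈ A (j - 1) := hpre2.subset hp2
          have hnodup : (A j).Nodup := by
            have := part_pairwise (A j) 1 (y j) (hpart j)
            exact this.imp (fun h => by intro he; rw [he] at h; omega)
          rw [← hs] at hnodup
          have := List.disjoint_of_nodup_append hnodup
          exact this hpprev (by simp)
      have hcnt' : overlapCnt b (j - 1) (A (j - 1)) = d := by
        rw [hAeq, ← hcnt]
        unfold overlapCnt
        congr 1
        apply List.filter_congr
        intro p hp
        have := part_mem (A j) 1 (y j) (hpart j) p hp
        rw [decide_eq_decide]
        constructor <;> intro h <;> constructor <;> omega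
      exact htrig (j - 1) (by omega) (by omega) hcnt'
    have hne : A j ≠ [] := by
      intro h
      unfold overlapCnt at hcnt
      rw [h] at hcnt
      simp only [List.filter_nil, List.length_nil] at hcnt
      omega
    obtain ⟨p, hp, hp2⟩ := part_last (A j) 1 (y j) (hpart j) hne
    exact ⟨p, hp, by omega⟩
end

section
/- In the decomposition of haplotype intervals into refined segments, each refined segment is relevant to at most one canonical refined segment. That is, if a refined segment [x, y] ∈ RS[c'] belongs to the canonical sets of two canonical refined segments [b₁, e₁] ∈ RS[c₁] and [b₂, e₂] ∈ RS[c₂], then (c₁, [b₁,e₁]) = (c₂, [b₂,e₂]). -/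

lemma part_lb : ∀ (L : List (ℕ × ℕ)) (x y : ℕ), Partitions L x y →
    ∀ p ∈ L, x ≤ p.1 ∧ p.1 ≤ p.2 := by
  intro L
  induction L with
  | nil => intro x y _ p hp; cases hp
  | cons a t ih =>
      intro x y hpart p hp
      obtain ⟨b, e⟩ := a
      obtain ⟨hb, hbe, ht⟩ := hpart
      rcases List.mem_cons.mp hp with hp | hp
      · subst hp hb; exact ⟨le_refl _, hbe⟩
      · have := ih (e+1) y ht p hp
        exact ⟨le_trans (by omega) this.1, this.2⟩

lemma part_unique : ∀ (L : List (ℕ × ℕ)) (x y : ℕ), Partitions L x y →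
    ∀ p ∈ L, ∀ q ∈ L, ∀ j, p.1 ≤ j → j ≤ p.2 → q.1 ≤ j → j ≤ q.2 → p = q := by
  intro L
  induction L with
  | nil => intro x y _ p hp; cases hp
  | cons a t ih =>
      intro x y hpart p hp q hq j hpj hjp hqj hjq
      obtain ⟨b, e⟩ := a
      obtain ⟨hb, hbe, ht⟩ := hpart
      rcases List.mem_cons.mp hp with hp | hp <;> rcases List.mem_cons.mp hq with hq | hq
      · rw [hp, hq]
      · have := (part_lb t (e+1) y ht q hq).1
        subst hp; simp at hpj hjp; omega
      · have := (part_lb t (e+1) y ht p hp).1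
        subst hq; simp at hqj hjq; omega
      · exact ih (e+1) y ht p hp q hq j hpj hjp hqj hjq

/-- Each refined segment is relevant to at most one canonical refined segment.
`RSc'` is the final list of refined segments of color `c'`, partitioning `[1, m]`.
`[b₁, e₁]` (of color `c₁`) and `[b₂, e₂]` (of color `c₂`) are canonical refined
segments: each overlaps exactly `d` segments of `RSc'`, the maximum right
endpoint among the overlapping segments is `eᵢ` (Lemma d-j), and
`φ⁻¹_j(c') = cᵢ` for every site `j ∈ [bᵢ, eᵢ]` (`phiInv j` is the color
immediately below `c'` in column `j`).  Refined segments of a common color are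
pairwise disjoint (`hdisj`).  If the segment `[x, yv] ∈ RSc'` overlaps both
canonical segments (i.e. belongs to both canonical sets), then the two canonical
segments coincide (same color and same interval). -/
theorem stmt11 (m d : ℕ) (hd : 2 ≤ d)
    (RSc' : List (ℕ × ℕ)) (hpart : Partitions RSc' 1 m)
    (phiInv : ℕ → ℕ)
    (c₁ c₂ b₁ e₁ b₂ e₂ x yv : ℕ)
    (h1 : 1 ≤ b₁ ∧ b₁ ≤ e₁ ∧ e₁ ≤ m) (h2 : 1 ≤ b₂ ∧ b₂ ≤ e₂ ∧ e₂ ≤ m)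
    (hcnt1 : overlapCnt b₁ e₁ RSc' = d) (hcnt2 : overlapCnt b₂ e₂ RSc' = d)
    (hmax1 : ∃ p ∈ RSc', p.1 ≤ e₁ ∧ b₁ ≤ p.2 ∧ p.2 = e₁)
    (hmax2 : ∃ p ∈ RSc', p.1 ≤ e₂ ∧ b₂ ≤ p.2 ∧ p.2 = e₂)
    (hphi1 : ∀ j, b₁ ≤ j → j ≤ e₁ → phiInv j = c₁)
    (hphi2 : ∀ j, b₂ ≤ j → j ≤ e₂ → phiInv j = c₂)
    (hdisj : c₁ = c₂ → ((b₁ = b₂ ∧ e₁ = e₂) ∨ Disjoint (Set.Icc b₁ e₁) (Set.Icc b₂ e₂)))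
    (hx : (x, yv) ∈ RSc')
    (hov1 : x ≤ e₁ ∧ b₁ ≤ yv) (hov2 : x ≤ e₂ ∧ b₂ ≤ yv) :
    c₁ = c₂ ∧ b₁ = b₂ ∧ e₁ = e₂ := by

  obtain ⟨p1, hp1m, hp1a, hp1b, hp1e⟩ := hmax1
  obtain ⟨p2, hp2m, hp2a, hp2b, hp2e⟩ := hmax2
  -- key: the two canonical intervals intersect
  have hint : b₂ ≤ e₁ ∧ b₁ ≤ e₂ := by
    constructor
    · by_contra h
      push_neg at h
      -- e₁ < b₂ ≤ yv, x ≤ e₁, so e₁ ∈ (x,yv) and e₁ ∈ p1, hence p1 = (x,yv)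
      have heq := part_unique RSc' 1 m hpart p1 hp1m (x, yv) hx e₁ hp1a (hp1e.ge)
        hov1.1 (by omega)
      have : p1.2 = yv := by rw [heq]
      omega
    · by_contra h
      push_neg at h
      have heq := part_unique RSc' 1 m hpart p2 hp2m (x, yv) hx e₂ hp2a (hp2e.ge)
        hov2.1 (by omega)
      have : p2.2 = yv := by rw [heq]
      omega
  set j := max b₁ b₂ with hj
  have hc : c₁ = c₂ := by
    rw [← hphi1 j (le_max_left _ _) (by omega), hphi2 j (le_max_right _ _) (by omega)]
  refine ⟨hc, ?_⟩
  rcases hdisj hc with h | h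
  · exact h
  · exfalso
    exact (Set.disjoint_left.mp h (Set.mem_Icc.mpr ⟨le_max_left _ _, by omega⟩))
      (Set.mem_Icc.mpr ⟨le_max_right _ _, by omega⟩)
end

section
/- Let I be the sequence obtained by iterating sites j = 1, ..., m and for each j, colors c = 1, ..., h, appending c whenever j is the right endpoint of a refined segment in RS[c]. For colors c ≠ c₁, let e be the right endpoint of the ℓ-th segment of RS[c], occurring at position x in I (the ℓ-th occurrence of c), and let e' ≥ e be the right endpoint of the segment of RS[c₁] containing e. Then the occurrence of c₁ in I corresponding to e' is located either at the largest position v < x holding c₁ (if c₁ < c and e' = e) or at the smallest position z > x holding c₁ (if c₁ > c, or if e' > e). -/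
namespace Partitions

theorem le_of_mem {L : List (ℕ × ℕ)} {x y b j : ℕ} (hL : Partitions L x y) (hbj : (b, j) ∈ L) :
    x ≤ b ∧ b ≤ j := by
  induction L generalizing x with
  | nil => simp at hbj
  | cons seg t ih =>
    obtain ⟨b₀, e₀⟩ := seg
    obtain ⟨rfl, hb₀e₀, ht⟩ := hL
    rcases List.mem_cons.1 hbj with heq | hmem
    · obtain ⟨rfl, rfl⟩ := Prod.ext_iff.1 heq
      exact ⟨le_rfl, hb₀e₀⟩
    · have := ih ht hmem
      omega

theorem right_eq_of_mem {L : List (ℕ × ℕ)} {x y s e b j : ℕ} (hL : Partitions L x y)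
    (hse : (s, e) ∈ L) (hbj : (b, j) ∈ L) (hsj : s ≤ j) (hje : j ≤ e) : j = e := by
  induction L generalizing x with
  | nil => simp at hse
  | cons seg t ih =>
    obtain ⟨b₀, e₀⟩ := seg
    obtain ⟨rfl, -, ht⟩ := hL
    rcases List.mem_cons.1 hse with hse | hse <;> rcases List.mem_cons.1 hbj with hbj | hbj
    · simp only [Prod.mk.injEq] at hse hbj
      omega
    · have := ht.le_of_mem hbj
      simp only [Prod.mk.injEq] at hse
      omega
    · have := ht.le_of_mem hse
      simp only [Prod.mk.injEq] at hbj
      omega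
    · exact ih ht hse hbj

end Partitions

theorem List.Pairwise.apply_getElem_lt_apply_getElem_iff {α β : Type*} [Preorder β]
    {f : α → β} {l : List α} (hl : l.Pairwise (fun a b => f a < f b)) {i j : ℕ}
    (hi : i < l.length) (hj : j < l.length) : f l[i] < f l[j] ↔ i < j := by
  have hsorted : (l.map f).SortedLT := (List.pairwise_map.2 hl).sortedLT
  simpa [Fin.lt_def] using
    hsorted.strictMono_get.lt_iff_lt (a := ⟨i, by simpa⟩) (b := ⟨j, by simpa⟩)

def siteColor (p : ℕ × ℕ) : ℕ ×ₗ ℕ := toLex (p.2, p.1)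

theorem siteColor_lt_siteColor {p q : ℕ × ℕ} :
    siteColor p < siteColor q ↔ p.2 < q.2 ∨ p.2 = q.2 ∧ p.1 < q.1 :=
  Prod.Lex.toLex_lt_toLex

/-- Correctness of the `I` array.  `I` is the list of entries `(color, site)`
obtained by iterating sites `j = 1, ..., m` and, for each `j`, colors
`c = 1, ..., h`, appending `(c, j)` whenever `j` is the right endpoint of a
refined segment of `RS[c]`; hence `I` is sorted lexicographically by
(site, color) (`hsort`) and contains exactly these entries (`hIiff`).
Let the `ℓ`-th segment of `RS[c]` have right endpoint `e`, recorded at position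
`x` of `I`; let `[s, e']` be the segment of `RS[c₁]` (`c₁ ≠ c`) containing `e`,
so `e' ≥ e`, recorded at position `w` of `I`.  Then `w` is the nearest position
before `x` holding color `c₁` when `c₁ < c` and `e' = e`, and the nearest
position after `x` holding color `c₁` otherwise (i.e. when `c₁ > c` or `e' > e`). -/
theorem stmt16 (m h : ℕ) (RS : ℕ → List (ℕ × ℕ))
    (hpart : ∀ c, 1 ≤ c → c ≤ h → Partitions (RS c) 1 m)
    (I : List (ℕ × ℕ))
    (hsort : I.Pairwise (fun p q => p.2 < q.2 ∨ (p.2 = q.2 ∧ p.1 < q.1)))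
    (hIiff : ∀ cc j, ((cc, j) ∈ I ↔ (1 ≤ cc ∧ cc ≤ h ∧ ∃ p ∈ RS cc, p.2 = j)))
    (c c₁ e e' s x w : ℕ) (hc : c ≠ c₁)
    (hx : x < I.length) (hxv : I.get ⟨x, hx⟩ = (c, e))
    (hc₁ : 1 ≤ c₁ ∧ c₁ ≤ h)
    (hseg : (s, e') ∈ RS c₁) (hse : s ≤ e) (hee' : e ≤ e')
    (hw : w < I.length) (hwv : I.get ⟨w, hw⟩ = (c₁, e')) :
    if c₁ < c ∧ e' = e then
      w < x ∧ ∀ u (hu : u < I.length), w < u → u < x → (I.get ⟨u, hu⟩).1 ≠ c₁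
    else
      x < w ∧ ∀ u (hu : u < I.length), x < u → u < w → (I.get ⟨u, hu⟩).1 ≠ c₁ := by
  have hkey : ∀ {i j} (hi : i < I.length) (hj : j < I.length),
      siteColor I[i] < siteColor I[j] ↔ i < j :=
    (hsort.imp siteColor_lt_siteColor.2).apply_getElem_lt_apply_getElem_iff
  simp only [List.get_eq_getElem] at hxv hwv ⊢
  split_ifs with hcase
  · obtain ⟨hc₁c, rfl⟩ := hcase
    refine ⟨(hkey hw hx).1 ?_, fun u hu hwu hux hcu => ?_⟩
    · simp [hwv, hxv, siteColor_lt_siteColor, hc₁c]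
    have hwu' := (hkey hw hu).2 hwu
    have hux' := (hkey hu hx).2 hux
    rw [hwv, siteColor_lt_siteColor] at hwu'
    rw [hxv, siteColor_lt_siteColor] at hux'
    omega
  · refine ⟨(hkey hx hw).1 ?_, fun u hu hxu huw hcu => ?_⟩
    · rw [hxv, hwv, siteColor_lt_siteColor]
      omega
    have hxu' := (hkey hx hu).2 hxu
    have huw' := (hkey hu hw).2 huw
    rw [hxv, siteColor_lt_siteColor] at hxu'
    rw [hwv, siteColor_lt_siteColor] at huw'
    have hmem : (c₁, I[u].2) ∈ I := hcu ▸ List.getElem_mem hu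
    obtain ⟨-, -, ⟨b, j⟩, hbj, hj⟩ := (hIiff c₁ I[u].2).1 hmem
    have := (hpart c₁ hc₁.1 hc₁.2).right_eq_of_mem hseg hbj (by omega) (by omega)
    omega
end
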